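/- Let 0<q<1 and let (α_{2n})_{n≥0}, (β_{2n})_{n≥0} be real sequences with α_0 ≠ 0 satisfying Σ_{j=0}^n β_{2j} α_{2(n-j)} / ([2j+1]_q! [2(n-j)+1]_q!) = δ_{n,0} for all n ≥ 0. Define p_n(z) = Σ_{k=0}^n qbinom(2n+1,2k+1) α_{2(n-k)}/[2(n-k)+1]_q · z^{2k+1}. Then for every n ≥ 0, z^{2n+1} = Σ_{k=0}^n qbinom(2n+1,2k+1) β_{2(n-k)}/[2(n-k)+1]_q · p_k(z). -/

import Mathlib

noncomputable def qNum (q : ℝ) (m : ℕ) : ℝ := (1 - q ^ m) / (1 - q)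

noncomputable def qFact (q : ℝ) (m : ℕ) : ℝ := ∏ j ∈ Finset.range m, qNum q (j + 1)

noncomputable def qBinom (q : ℝ) (n k : ℕ) : ℝ := qFact q n / (qFact q k * qFact q (n - k))

noncomputable def Dq (q : ℝ) (f : ℝ → ℝ) (z : ℝ) : ℝ :=
  if z = 0 then deriv f 0 else (f z - f (q * z)) / ((1 - q) * z)

noncomputable def jacksonIntegral01 (q : ℝ) (f : ℝ → ℝ) : ℝ :=
  (1 - q) * ∑' j : ℕ, q ^ j * f (q ^ j)

lemma qNum_pos' {q : ℝ} (hq0 : 0 < q) (hq1 : q < 1) (m : ℕ) : 0 < qNum q (m + 1) := by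
  have h : q ^ (m + 1) < 1 := pow_lt_one₀ hq0.le hq1 (Nat.succ_ne_zero m)
  exact div_pos (by linarith) (by linarith)

lemma qFact_pos' {q : ℝ} (hq0 : 0 < q) (hq1 : q < 1) (m : ℕ) : 0 < qFact q m :=
  Finset.prod_pos fun j _ => qNum_pos' hq0 hq1 j

lemma qFact_succ' (q : ℝ) (m : ℕ) : qFact q (m + 1) = qFact q m * qNum q (m + 1) :=
  Finset.prod_range_succ _ _

theorem stmt5 (q : ℝ) (hq0 : 0 < q) (hq1 : q < 1) (α β : ℕ → ℝ) (hα : α 0 ≠ 0)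
    (hconv : ∀ n : ℕ, ∑ j ∈ Finset.range (n + 1),
      β (2 * j) * α (2 * (n - j)) / (qFact q (2 * j + 1) * qFact q (2 * (n - j) + 1))
        = if n = 0 then 1 else 0)
    (p : ℕ → ℝ → ℝ)
    (hp : ∀ n z, p n z = ∑ k ∈ Finset.range (n + 1),
      qBinom q (2 * n + 1) (2 * k + 1) * (α (2 * (n - k)) / qNum q (2 * (n - k) + 1)) *
        z ^ (2 * k + 1)) :
    ∀ n : ℕ, ∀ z : ℝ, z ^ (2 * n + 1) = ∑ k ∈ Finset.range (n + 1),
      qBinom q (2 * n + 1) (2 * k + 1) * (β (2 * (n - k)) / qNum q (2 * (n - k) + 1)) *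
        p k z := by
  have hNum : ∀ m : ℕ, qNum q (m + 1) ≠ 0 := fun m => (qNum_pos' hq0 hq1 m).ne'
  have hFact : ∀ m : ℕ, qFact q m ≠ 0 := fun m => (qFact_pos' hq0 hq1 m).ne'
  intro n z
  have hrhs : ∑ k ∈ Finset.range (n + 1),
      qBinom q (2 * n + 1) (2 * k + 1) * (β (2 * (n - k)) / qNum q (2 * (n - k) + 1)) *
        p k z
      = ∑ m ∈ Finset.range (n + 1), ∑ k ∈ Finset.Ico m (n + 1),
          qBinom q (2 * n + 1) (2 * k + 1) * (β (2 * (n - k)) / qNum q (2 * (n - k) + 1)) *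
          (qBinom q (2 * k + 1) (2 * m + 1) * (α (2 * (k - m)) / qNum q (2 * (k - m) + 1)) *
            z ^ (2 * m + 1)) := by
    simp only [hp, Finset.mul_sum]
    exact Finset.sum_comm' (by
      intro k m
      simp only [Finset.mem_range, Finset.mem_Ico]
      omega)
  rw [hrhs]
  have key : ∀ m ∈ Finset.range (n + 1),
      (∑ k ∈ Finset.Ico m (n + 1),
          qBinom q (2 * n + 1) (2 * k + 1) * (β (2 * (n - k)) / qNum q (2 * (n - k) + 1)) *
          (qBinom q (2 * k + 1) (2 * m + 1) * (α (2 * (k - m)) / qNum q (2 * (k - m) + 1)) *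
            z ^ (2 * m + 1)))
        = if m = n then z ^ (2 * n + 1) else 0 := by
    intro m hm
    have hmn : m ≤ n := Nat.lt_succ_iff.mp (Finset.mem_range.mp hm)
    rw [Finset.sum_Ico_eq_sum_range]
    have hd : n + 1 - m = (n - m) + 1 := by omega
    rw [hd]
    set d := n - m with hdd
    have step : ∀ j ∈ Finset.range (d + 1),
        qBinom q (2 * n + 1) (2 * (m + j) + 1) *
          (β (2 * (n - (m + j))) / qNum q (2 * (n - (m + j)) + 1)) *
          (qBinom q (2 * (m + j) + 1) (2 * m + 1) *
            (α (2 * ((m + j) - m)) / qNum q (2 * ((m + j) - m) + 1)) * z ^ (2 * m + 1))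
        = (qFact q (2 * n + 1) / qFact q (2 * m + 1)) * z ^ (2 * m + 1) *
          (β (2 * (d - j)) * α (2 * j) /
            (qFact q (2 * (d - j) + 1) * qFact q (2 * j + 1))) := by
      intro j hj
      have hjd : j ≤ d := Nat.lt_succ_iff.mp (Finset.mem_range.mp hj)
      have e3 : n - (m + j) = d - j := by omega
      have e4 : m + j - m = j := by omega
      have e1 : 2 * n + 1 - (2 * (m + j) + 1) = 2 * (d - j) := by omega
      have e2 : 2 * (m + j) + 1 - (2 * m + 1) = 2 * j := by omega
      have A1 := hFact (2 * (m + j) + 1)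
      have A2 := hFact (2 * (d - j))
      have A3 := hFact (2 * m + 1)
      have A4 := hFact (2 * j)
      have A5 := hNum (2 * (d - j))
      have A6 := hNum (2 * j)
      simp only [e3, e4, qBinom, e1, e2, qFact_succ' q (2 * (d - j)), qFact_succ' q (2 * j)]
      field_simp [A1, A2, A3, A4, A5, A6]
    rw [Finset.sum_congr rfl step, ← Finset.mul_sum]
    have hrev : ∑ j ∈ Finset.range (d + 1),
        β (2 * (d - j)) * α (2 * j) / (qFact q (2 * (d - j) + 1) * qFact q (2 * j + 1))
        = ∑ j ∈ Finset.range (d + 1),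
        β (2 * j) * α (2 * (d - j)) / (qFact q (2 * j + 1) * qFact q (2 * (d - j) + 1)) := by
      rw [← Finset.sum_range_reflect]
      apply Finset.sum_congr rfl
      intro j hj
      have hjd : j < d + 1 := Finset.mem_range.mp hj
      have h1 : d + 1 - 1 - j = d - j := by omega
      have h2 : d - (d - j) = j := by omega
      rw [h1, h2]
    rw [hrev, hconv d]
    by_cases h : m = n
    · have hd0 : d = 0 := by omega
      simp [hd0, h, div_self (hFact (2 * n + 1))]
    · have hd0 : d ≠ 0 := by omega
      simp [hd0, h]
  rw [Finset.sum_congr rfl key]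
  rw [Finset.sum_ite_eq' (Finset.range (n + 1)) n (fun _ => z ^ (2 * n + 1)),
    if_pos (Finset.self_mem_range_succ n)]
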